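/- Let d ≥ 1, M > 0, and let f : ℝ^d → ℝ be differentiable with M-Lipschitz gradient. Let ν > 0 and let x_0, x ∈ ℝ^d satisfy ‖x − x_0‖ ≥ √d · ν. Then f(x) ≤ f(x_0) + ⟨∇^ν f(x_0), x − x_0⟩ + 2M‖x − x_0‖², i.e., outside the ball of radius √d·ν around x_0 the quadratic proxy built from the finite-difference gradient estimate upper-bounds f. -/

import Mathlib

/-!
A Lipschitz gradient gives, by the mean value theorem, the first-order estimate
`|f y - f x - ⟪∇f x, y - x⟫| ≤ M ‖y - x‖²`. Along the coordinate steps `ν e_j` it shows that every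
coordinate of `∇^ν f(x₀)` is within `M ν` of that of `∇f(x₀)`, so `‖∇^ν f(x₀) - ∇f(x₀)‖ ≤ √d M ν`.
Replacing `∇f(x₀)` by `∇^ν f(x₀)` in the first-order estimate therefore costs at most
`√d M ν ‖x - x₀‖ ≤ M ‖x - x₀‖²` once `‖x - x₀‖ ≥ √d ν`.
-/

open scoped BigOperators

/-- The finite-difference gradient estimator
`∇^ν f(x) = ∑_{j=1}^d ((f(x + ν e_j) − f(x))/ν) e_j`. -/
noncomputable def fdGrad {d : ℕ} (f : EuclideanSpace ℝ (Fin d) → ℝ) (ν : ℝ)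
    (x : EuclideanSpace ℝ (Fin d)) : EuclideanSpace ℝ (Fin d) :=
  ∑ j : Fin d, ((f (x + ν • EuclideanSpace.single j (1 : ℝ)) - f x) / ν) •
    EuclideanSpace.single j (1 : ℝ)

open Metric

lemma EuclideanSpace.norm_le_sqrt_card_mul {ι : Type*} [Fintype ι] {x : EuclideanSpace ℝ ι}
    {c : ℝ} (hc : 0 ≤ c) (hx : ∀ i, |x i| ≤ c) : ‖x‖ ≤ √(Fintype.card ι) * c :=
  ((EuclideanSpace.basisFun ι ℝ).norm_le_card_mul_iSup_norm_inner x).trans <| by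
    gcongr
    exact Real.iSup_le (fun i => by simpa using hx i) hc

section LipschitzGradient

variable {E : Type*} [NormedAddCommGroup E] [InnerProductSpace ℝ E] [CompleteSpace E]
  {f : E → ℝ} {M : ℝ}

lemma abs_sub_sub_inner_gradient_le (hf : Differentiable ℝ f)
    (hglip : ∀ x y, ‖gradient f x - gradient f y‖ ≤ M * ‖x - y‖) (hM : 0 ≤ M) (x y : E) :
    |f y - f x - inner ℝ (gradient f x) (y - x)| ≤ M * ‖y - x‖ ^ 2 := by
  have hbound : ∀ z ∈ closedBall x ‖y - x‖, ‖fderiv ℝ f z - fderiv ℝ f x‖ ≤ M * ‖y - x‖ := by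
    intro z hz
    rw [← toDual_gradient, ← toDual_gradient, ← map_sub, LinearIsometryEquiv.norm_map]
    exact (hglip z x).trans (by gcongr; exact mem_closedBall_iff_norm.1 hz)
  have := (convex_closedBall x ‖y - x‖).norm_image_sub_le_of_norm_fderiv_le'
    (fun z _ => hf z) hbound (mem_closedBall_self (norm_nonneg _))
    (mem_closedBall_iff_norm.2 le_rfl)
  rw [inner_gradient_left, ← Real.norm_eq_abs]
  simpa [mul_assoc, sq] using this

end LipschitzGradient

section FiniteDifference

variable {d : ℕ} {f : EuclideanSpace ℝ (Fin d) → ℝ} {M ν : ℝ}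

lemma fdGrad_apply (f : EuclideanSpace ℝ (Fin d) → ℝ) (ν : ℝ) (x : EuclideanSpace ℝ (Fin d))
    (j : Fin d) :
    fdGrad f ν x j = (f (x + ν • EuclideanSpace.single j 1) - f x) / ν := by
  simp [fdGrad, Pi.single_apply]

lemma abs_fdGrad_sub_gradient_apply_le (hf : Differentiable ℝ f)
    (hglip : ∀ x y, ‖gradient f x - gradient f y‖ ≤ M * ‖x - y‖) (hM : 0 ≤ M) (hν : 0 < ν)
    (x : EuclideanSpace ℝ (Fin d)) (j : Fin d) :
    |(fdGrad f ν x - gradient f x) j| ≤ M * ν := by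
  have key := abs_sub_sub_inner_gradient_le hf hglip hM x (x + ν • EuclideanSpace.single j 1)
  rw [add_sub_cancel_left, real_inner_smul_right, EuclideanSpace.inner_single_right, norm_smul,
    PiLp.norm_single, norm_one, one_mul, Real.norm_of_nonneg hν.le] at key
  rw [PiLp.sub_apply, fdGrad_apply, div_sub' hν.ne', abs_div, abs_of_pos hν, div_le_iff₀ hν]
  exact key.trans_eq (by ring)

lemma norm_fdGrad_sub_gradient_le (hf : Differentiable ℝ f)
    (hglip : ∀ x y, ‖gradient f x - gradient f y‖ ≤ M * ‖x - y‖) (hM : 0 ≤ M) (hν : 0 < ν)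
    (x : EuclideanSpace ℝ (Fin d)) :
    ‖fdGrad f ν x - gradient f x‖ ≤ √d * (M * ν) := by
  simpa using EuclideanSpace.norm_le_sqrt_card_mul (by positivity)
    (abs_fdGrad_sub_gradient_apply_le hf hglip hM hν x)

end FiniteDifference

theorem stmt3_general {d : ℕ} (M : ℝ) (hM : 0 < M)
    (f : EuclideanSpace ℝ (Fin d) → ℝ) (hf : Differentiable ℝ f)
    (hglip : ∀ x y : EuclideanSpace ℝ (Fin d),
      ‖gradient f x - gradient f y‖ ≤ M * ‖x - y‖)
    (ν : ℝ) (hν : 0 < ν)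
    (x0 x : EuclideanSpace ℝ (Fin d)) (hx : Real.sqrt d * ν ≤ ‖x - x0‖) :
    f x ≤ f x0 + (inner ℝ (fdGrad f ν x0) (x - x0) : ℝ) + 2 * M * ‖x - x0‖ ^ 2 := by
  have htaylor := (abs_le.1 (abs_sub_sub_inner_gradient_le hf hglip hM.le x0 x)).2
  have herr : inner ℝ (gradient f x0 - fdGrad f ν x0) (x - x0) ≤ M * ‖x - x0‖ ^ 2 :=
    calc inner ℝ (gradient f x0 - fdGrad f ν x0) (x - x0)
        ≤ ‖gradient f x0 - fdGrad f ν x0‖ * ‖x - x0‖ := real_inner_le_norm _ _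
      _ ≤ √d * (M * ν) * ‖x - x0‖ := by
        rw [norm_sub_rev]; gcongr; exact norm_fdGrad_sub_gradient_le hf hglip hM.le hν x0
      _ = M * (√d * ν) * ‖x - x0‖ := by ring
      _ ≤ M * ‖x - x0‖ * ‖x - x0‖ := by gcongr
      _ = M * ‖x - x0‖ ^ 2 := by ring
  rw [inner_sub_left] at herr
  linarith

/-- Outside the ball of radius `√d·ν` around `x₀`, the quadratic proxy built
from the finite-difference gradient estimate upper-bounds `f`. -/
theorem stmt3 {d : ℕ} (hd : 1 ≤ d) (M : ℝ) (hM : 0 < M)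
    (f : EuclideanSpace ℝ (Fin d) → ℝ) (hf : Differentiable ℝ f)
    (hglip : ∀ x y : EuclideanSpace ℝ (Fin d),
      ‖gradient f x - gradient f y‖ ≤ M * ‖x - y‖)
    (ν : ℝ) (hν : 0 < ν)
    (x0 x : EuclideanSpace ℝ (Fin d)) (hx : Real.sqrt d * ν ≤ ‖x - x0‖) :
    f x ≤ f x0 + (inner ℝ (fdGrad f ν x0) (x - x0) : ℝ) + 2 * M * ‖x - x0‖ ^ 2 :=
  stmt3_general M hM f hf hglip ν hν x0 x hx
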